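/- arXiv:1802.09124 — 3 statements merged into one kernel-verified Lean document; each statement's English description precedes it below -/
import Mathlib

section
/- Strict growth of the feasible region when one more flight is cancelled: for any Γ_0 ⊆ C with R_{Γ_0} nonempty and any γ ∈ C with γ ∉ Γ_0, the feasible region R_{Γ_0} is a strict subset of R_{Γ_0 ∪ {γ}}. -/
open Finset
open scoped Classical

noncomputable section

/-- The cancellation-adjusted vector: component `i` is zeroed out if flight `i ∈ Γ`. -/
def cancel {n : ℕ} (Γ : Finset (Fin n)) (v : Fin n → ℝ) : Fin n → ℝ :=
  fun i => if i ∈ Γ then 0 else v i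

/-- The feasible region `R_Γ` of departure-time vectors. -/
def region {n : ℕ} (s zo zd e r t d : Fin n → ℝ) (S : Finset (Fin n))
    (Γ : Finset (Fin n)) : Set (Fin n → ℝ) :=
  {x | (∀ i, s i ≤ x i) ∧
       (∀ i, -zo i ≤ x i) ∧
       (∀ i, x i ≤ e i - zd i - cancel Γ r i - cancel Γ t i - cancel Γ d i) ∧
       (∀ (i : Fin n) (h : (i : ℕ) + 1 < n),
          (⟨(i : ℕ) + 1, h⟩ : Fin n) ∉ S →
          cancel Γ r i + cancel Γ t i + cancel Γ d i ≤ x ⟨(i : ℕ) + 1, h⟩ - x i)}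

/-- The weighted-delay objective `Σ_i w_i (x_i - s_i)`. -/
def delayObj {n : ℕ} (w s : Fin n → ℝ) (x : Fin n → ℝ) : ℝ :=
  ∑ i, w i * (x i - s i)

/-- The optimal delay value `D(Γ)`. -/
def Dval {n : ℕ} (s zo zd e r t d w : Fin n → ℝ) (S Γ : Finset (Fin n)) : ℝ :=
  sInf (delayObj w s '' region s zo zd e r t d S Γ)

/-- The total cost `OPT(Γ) = D(Γ) + Σ_{i ∈ Γ} p_i`. -/
def OPT {n : ℕ} (s zo zd e r t d w p : Fin n → ℝ) (S Γ : Finset (Fin n)) : ℝ :=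
  Dval s zo zd e r t d w S Γ + ∑ i ∈ Γ, p i

/-- Strict growth of the feasible region when one more flight is cancelled:
if `R_{Γ₀}` is nonempty then `R_{Γ₀} ⊂ R_{Γ₀ ∪ {γ}}`. -/
theorem stmt_4 {n : ℕ} (hn : 0 < n)
    (s zo zd e r t d : Fin n → ℝ) (S C : Finset (Fin n))
    (hr : ∀ i, 0 < r i) (ht : ∀ i, 0 < t i) (hd : ∀ i, 0 ≤ d i)
    (hS : (⟨0, hn⟩ : Fin n) ∈ S)
    (Γ₀ : Finset (Fin n)) (hΓ₀ : Γ₀ ⊆ C)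
    (hne : (region s zo zd e r t d S Γ₀).Nonempty)
    (γ : Fin n) (hγC : γ ∈ C) (hγ : γ ∉ Γ₀) :
    region s zo zd e r t d S Γ₀ ⊂ region s zo zd e r t d S (insert γ Γ₀) := by
  set Γ' := insert γ Γ₀ with hΓ'
  have key : ∀ (v : Fin n → ℝ) (i : Fin n), i ≠ γ → cancel Γ' v i = cancel Γ₀ v i := by
    intro v i hi
    simp [cancel, hΓ', Finset.mem_insert, hi]
  have keyγ : ∀ v : Fin n → ℝ, cancel Γ' v γ = 0 := by
    intro v; simp [cancel, hΓ']
  have keyγ₀ : ∀ v : Fin n → ℝ, cancel Γ₀ v γ = v γ := by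
    intro v; simp [cancel, hγ]
  have hsub : region s zo zd e r t d S Γ₀ ⊆ region s zo zd e r t d S Γ' := by
    rintro x ⟨h1, h2, h3, h4⟩
    refine ⟨h1, h2, ?_, ?_⟩
    · intro i
      by_cases hi : i = γ
      · subst hi
        have := h3 i
        rw [keyγ₀, keyγ₀, keyγ₀] at this
        rw [keyγ, keyγ, keyγ]
        have := hr i; have := ht i; have := hd i
        linarith
      · rw [key r i hi, key t i hi, key d i hi]
        exact h3 i
    · intro i h hi
      by_cases hig : i = γ
      · subst hig
        have := h4 i h hi
        rw [keyγ₀, keyγ₀, keyγ₀] at this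
        rw [keyγ, keyγ, keyγ]
        have := hr i; have := ht i; have := hd i
        linarith
      · rw [key r i hig, key t i hig, key d i hig]
        exact h4 i h hi
  obtain ⟨x, h1, h2, h3, h4⟩ := hne
  have hxub : x γ ≤ e γ - zd γ - r γ - t γ - d γ := by
    have := h3 γ
    rwa [keyγ₀, keyγ₀, keyγ₀] at this
  have hc : 0 < r γ + t γ + d γ := by
    have := hr γ; have := ht γ; have := hd γ; linarith
  by_cases hsucc : ∃ h : (γ : ℕ) + 1 < n, (⟨(γ : ℕ) + 1, h⟩ : Fin n) ∉ S
  · obtain ⟨hlt, hnS⟩ := hsucc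
    have hγ1ne : (⟨(γ : ℕ) + 1, hlt⟩ : Fin n) ≠ γ := by
      intro hcon
      have : (γ : ℕ) + 1 = (γ : ℕ) := congrArg Fin.val hcon
      omega
    have hchain : r γ + t γ + d γ ≤ x ⟨(γ : ℕ) + 1, hlt⟩ - x γ := by
      have := h4 γ hlt hnS
      rwa [keyγ₀, keyγ₀, keyγ₀] at this
    obtain ⟨y, hyγ, hyi⟩ :
        ∃ y : Fin n → ℝ, y γ = min (e γ - zd γ) (x ⟨(γ : ℕ) + 1, hlt⟩) ∧
          ∀ i, i ≠ γ → y i = x i :=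
      ⟨Function.update x γ _, Function.update_self γ _ x,
        fun i hi => Function.update_of_ne hi _ x⟩
    have hmin1 := min_le_left (e γ - zd γ) (x ⟨(γ : ℕ) + 1, hlt⟩)
    have hmin2 := min_le_right (e γ - zd γ) (x ⟨(γ : ℕ) + 1, hlt⟩)
    have hxv : x γ + (r γ + t γ + d γ) ≤ y γ := by
      rw [hyγ]
      apply le_min <;> linarith
    have hymem : y ∈ region s zo zd e r t d S Γ' := by
      refine ⟨?_, ?_, ?_, ?_⟩
      · intro i
        by_cases hi : i = γ
        · subst hi; have := h1 i; linarith
        · rw [hyi i hi]; exact h1 i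
      · intro i
        by_cases hi : i = γ
        · subst hi; have := h2 i; linarith
        · rw [hyi i hi]; exact h2 i
      · intro i
        by_cases hi : i = γ
        · subst hi; rw [keyγ, keyγ, keyγ, hyγ]; linarith
        · rw [hyi i hi, key r i hi, key t i hi, key d i hi]
          exact h3 i
      · intro i h hiS
        by_cases hig : i = γ
        · subst hig
          rw [keyγ, keyγ, keyγ]
          have hfe : (⟨(i : ℕ) + 1, h⟩ : Fin n) = ⟨(i : ℕ) + 1, hlt⟩ := rfl
          rw [hfe, hyi _ hγ1ne]
          have : y i ≤ x ⟨(i : ℕ) + 1, hlt⟩ := by rw [hyγ]; exact hmin2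
          linarith
        · rw [key r i hig, key t i hig, key d i hig, hyi i hig]
          have hx4 := h4 i h hiS
          by_cases hi1g : (⟨(i : ℕ) + 1, h⟩ : Fin n) = γ
          · rw [hi1g, hyγ]
            rw [hi1g] at hx4
            have : x γ + (r γ + t γ + d γ) ≤ min (e γ - zd γ) (x ⟨(γ : ℕ) + 1, hlt⟩) := by
              apply le_min <;> linarith
            linarith
          · rw [hyi _ hi1g]
            exact hx4
    have hynot : y ∉ region s zo zd e r t d S Γ₀ := by
      rintro ⟨g1, g2, g3, g4⟩
      rcases le_or_gt (e γ - zd γ) (x ⟨(γ : ℕ) + 1, hlt⟩) with hle | hlt2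
      · have hveq : y γ = e γ - zd γ := by rw [hyγ]; exact min_eq_left hle
        have := g3 γ
        rw [keyγ₀, keyγ₀, keyγ₀, hveq] at this
        linarith
      · have hveq : y γ = x ⟨(γ : ℕ) + 1, hlt⟩ := by rw [hyγ]; exact min_eq_right hlt2.le
        have := g4 γ hlt hnS
        rw [keyγ₀, keyγ₀, keyγ₀, hyi _ hγ1ne, hveq] at this
        linarith
    exact ⟨hsub, fun hcon => hynot (hcon hymem)⟩
  · push_neg at hsucc
    obtain ⟨y, hyγ, hyi⟩ :
        ∃ y : Fin n → ℝ, y γ = e γ - zd γ ∧ ∀ i, i ≠ γ → y i = x i :=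
      ⟨Function.update x γ _, Function.update_self γ _ x,
        fun i hi => Function.update_of_ne hi _ x⟩
    have hymem : y ∈ region s zo zd e r t d S Γ' := by
      refine ⟨?_, ?_, ?_, ?_⟩
      · intro i
        by_cases hi : i = γ
        · subst hi; have := h1 i; linarith
        · rw [hyi i hi]; exact h1 i
      · intro i
        by_cases hi : i = γ
        · subst hi; have := h2 i; linarith
        · rw [hyi i hi]; exact h2 i
      · intro i
        by_cases hi : i = γ
        · subst hi; rw [keyγ, keyγ, keyγ, hyγ]; linarith
        · rw [hyi i hi, key r i hi, key t i hi, key d i hi]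
          exact h3 i
      · intro i h hiS
        by_cases hig : i = γ
        · subst hig
          exact absurd (hsucc h) hiS
        · rw [key r i hig, key t i hig, key d i hig, hyi i hig]
          have hx4 := h4 i h hiS
          by_cases hi1g : (⟨(i : ℕ) + 1, h⟩ : Fin n) = γ
          · rw [hi1g, hyγ]
            rw [hi1g] at hx4
            linarith
          · rw [hyi _ hi1g]
            exact hx4
    have hynot : y ∉ region s zo zd e r t d S Γ₀ := by
      rintro ⟨g1, g2, g3, g4⟩
      have := g3 γ
      rw [keyγ₀, keyγ₀, keyγ₀, hyγ] at this
      linarith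
    exact ⟨hsub, fun hcon => hynot (hcon hymem)⟩
end
end

section
/- The optimal delay value is nonincreasing in the cancellation set: if R_∅ is nonempty, then for any Γ ⊆ Γ' ⊆ C, D(Γ') ≤ D(Γ), where D(Γ) = min over x ∈ R_Γ of Σ_i w_i (x_i − s_i). -/
open Finset
open scoped Classical

noncomputable section

/-! Cancelling more flights only zeroes out more of the nonnegative durations `r, t, d`, which
relaxes every constraint, so `R_Γ ⊆ R_Γ'` and the infimum over the larger region is smaller.
All regions lie in the box `s ≤ x ≤ e - z_d`, on which the continuous objective is bounded below,
and `R_∅ ⊆ R_Γ` makes them nonempty. -/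

section

variable {n : ℕ}

lemma cancel_nonneg {Γ : Finset (Fin n)} {v : Fin n → ℝ} (hv : ∀ i, 0 ≤ v i) (i : Fin n) :
    0 ≤ cancel Γ v i := by
  unfold cancel
  split_ifs
  exacts [le_rfl, hv i]

lemma cancel_le_cancel_of_subset {Γ Γ' : Finset (Fin n)} (h : Γ ⊆ Γ') {v : Fin n → ℝ}
    (hv : ∀ i, 0 ≤ v i) (i : Fin n) : cancel Γ' v i ≤ cancel Γ v i := by
  unfold cancel
  by_cases hi : i ∈ Γ
  · simp [hi, h hi]
  · split_ifs <;> simp [hv i]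

section Region

variable (s zo zd e : Fin n → ℝ) {r t d : Fin n → ℝ} (S : Finset (Fin n))

lemma region_mono {Γ Γ' : Finset (Fin n)} (h : Γ ⊆ Γ')
    (hr : ∀ i, 0 ≤ r i) (ht : ∀ i, 0 ≤ t i) (hd : ∀ i, 0 ≤ d i) :
    region s zo zd e r t d S Γ ⊆ region s zo zd e r t d S Γ' := by
  rintro x ⟨hs, hzo, hupper, hgap⟩
  have hcancel (i : Fin n) :
      cancel Γ' r i + cancel Γ' t i + cancel Γ' d i ≤ cancel Γ r i + cancel Γ t i + cancel Γ d i := by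
    linarith [cancel_le_cancel_of_subset h hr i, cancel_le_cancel_of_subset h ht i,
      cancel_le_cancel_of_subset h hd i]
  refine ⟨hs, hzo, fun i => ?_, fun i hi hiS => ?_⟩
  · linarith [hupper i, hcancel i]
  · linarith [hgap i hi hiS, hcancel i]

lemma region_subset_Icc (Γ : Finset (Fin n))
    (hr : ∀ i, 0 ≤ r i) (ht : ∀ i, 0 ≤ t i) (hd : ∀ i, 0 ≤ d i) :
    region s zo zd e r t d S Γ ⊆ Set.Icc s (e - zd) := by
  rintro x ⟨hs, -, hupper, -⟩
  refine ⟨hs, fun i => ?_⟩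
  show x i ≤ e i - zd i
  linarith [hupper i, cancel_nonneg (Γ := Γ) hr i, cancel_nonneg (Γ := Γ) ht i,
    cancel_nonneg (Γ := Γ) hd i]

lemma continuous_delayObj (w : Fin n → ℝ) : Continuous (delayObj w s) := by
  unfold delayObj
  fun_prop

lemma bddBelow_delayObj_image_region (w : Fin n → ℝ) (Γ : Finset (Fin n))
    (hr : ∀ i, 0 ≤ r i) (ht : ∀ i, 0 ≤ t i) (hd : ∀ i, 0 ≤ d i) :
    BddBelow (delayObj w s '' region s zo zd e r t d S Γ) :=
  ((isCompact_Icc.image (continuous_delayObj s w)).bddBelow).mono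
    (Set.image_mono (region_subset_Icc s zo zd e S Γ hr ht hd))

end Region

end

theorem stmt_6_general {n : ℕ}
    (s zo zd e r t d w : Fin n → ℝ) (S : Finset (Fin n))
    (hr : ∀ i, 0 < r i) (ht : ∀ i, 0 < t i) (hd : ∀ i, 0 ≤ d i)
    (hne : (region s zo zd e r t d S ∅).Nonempty)
    (Γ Γ' : Finset (Fin n)) (hΓΓ' : Γ ⊆ Γ') :
    Dval s zo zd e r t d w S Γ' ≤ Dval s zo zd e r t d w S Γ := by
  have hr' : ∀ i, 0 ≤ r i := fun i => (hr i).le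
  have ht' : ∀ i, 0 ≤ t i := fun i => (ht i).le
  have hΓ_nonempty : (region s zo zd e r t d S Γ).Nonempty :=
    hne.mono (region_mono s zo zd e S (Finset.empty_subset Γ) hr' ht' hd)
  exact csInf_le_csInf (bddBelow_delayObj_image_region s zo zd e S w Γ' hr' ht' hd)
    (hΓ_nonempty.image _) (Set.image_mono (region_mono s zo zd e S hΓΓ' hr' ht' hd))

/-- The optimal delay value `D(Γ)` is nonincreasing in the cancellation set:
if `R_∅` is nonempty and `Γ ⊆ Γ' ⊆ C`, then `D(Γ') ≤ D(Γ)`. -/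
theorem stmt_6 {n : ℕ} (hn : 0 < n)
    (s zo zd e r t d w : Fin n → ℝ) (S C : Finset (Fin n))
    (hr : ∀ i, 0 < r i) (ht : ∀ i, 0 < t i) (hd : ∀ i, 0 ≤ d i)
    (hw : ∀ i, 0 ≤ w i)
    (hS : (⟨0, hn⟩ : Fin n) ∈ S)
    (hne : (region s zo zd e r t d S ∅).Nonempty)
    (Γ Γ' : Finset (Fin n)) (hΓΓ' : Γ ⊆ Γ') (hΓ'C : Γ' ⊆ C) :
    Dval s zo zd e r t d w S Γ' ≤ Dval s zo zd e r t d w S Γ :=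
  stmt_6_general s zo zd e r t d w S hr ht hd hne Γ Γ' hΓΓ'
end
end

section
/- Never-cancel claim from the proof of the main theorem: assume R_∅ is nonempty and let γ ∈ C satisfy OPT({γ}) ≥ OPT(∅) (i.e., cancelling flight γ alone does not strictly improve the total cost over cancelling nothing). Then cancelling flight γ is never optimal: for every Γ ⊆ C with γ ∈ Γ, OPT(Γ \ {γ}) ≤ OPT(Γ). -/
open Finset
open scoped Classical

noncomputable section

section Aux

variable {n : ℕ}

/-- The lower bound for each coordinate. -/
def LBv (s zo : Fin n → ℝ) (i : Fin n) : ℝ := max (s i) (-zo i)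

/-- The per-index "length" of a flight, adjusted by cancellation. -/
def cv (r t d : Fin n → ℝ) (Γ : Finset (Fin n)) (i : Fin n) : ℝ :=
  cancel Γ r i + cancel Γ t i + cancel Γ d i

lemma cancel_le_cancel {Γ' Γ : Finset (Fin n)} (hsub : Γ' ⊆ Γ) {v : Fin n → ℝ} {i : Fin n}
    (hv : 0 ≤ v i) : cancel Γ v i ≤ cancel Γ' v i := by
  unfold cancel
  by_cases h1 : i ∈ Γ'
  · simp [h1, hsub h1]
  · by_cases h2 : i ∈ Γ <;> simp [h1, h2, hv]

lemma cv_anti (r t d : Fin n → ℝ) (hr : ∀ i, 0 < r i) (ht : ∀ i, 0 < t i)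
    (hd : ∀ i, 0 ≤ d i) {Γ' Γ : Finset (Fin n)} (hsub : Γ' ⊆ Γ) (i : Fin n) :
    cv r t d Γ i ≤ cv r t d Γ' i := by
  unfold cv
  have h1 := cancel_le_cancel hsub (v := r) (i := i) (hr i).le
  have h2 := cancel_le_cancel hsub (v := t) (i := i) (ht i).le
  have h3 := cancel_le_cancel hsub (v := d) (i := i) (hd i)
  linarith

lemma cv_diff (r t d : Fin n → ℝ) {γ : Fin n} {Δ : Finset (Fin n)} (hγ : γ ∉ Δ) (i : Fin n) :
    cv r t d Δ i - cv r t d (insert γ Δ) i = cv r t d ∅ i - cv r t d {γ} i := by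
  unfold cv cancel
  by_cases h1 : i = γ
  · subst h1; simp [hγ]
  · by_cases h2 : i ∈ Δ <;> simp [h1, h2, Finset.mem_insert]

/-- The least point of the region, as a sequence indexed by ℕ. -/
def Yaux (s zo r t d : Fin n → ℝ) (S Γ : Finset (Fin n)) : ℕ → ℝ
  | 0 => if h : 0 < n then LBv s zo ⟨0, h⟩ else 0
  | k + 1 =>
    if h : k + 1 < n then
      if (⟨k + 1, h⟩ : Fin n) ∈ S then LBv s zo ⟨k + 1, h⟩
      else max (LBv s zo ⟨k + 1, h⟩)
        (Yaux s zo r t d S Γ k + cv r t d Γ ⟨k, Nat.lt_of_succ_lt h⟩)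
    else 0

/-- The least point of the region. -/
def Yv (s zo r t d : Fin n → ℝ) (S Γ : Finset (Fin n)) (i : Fin n) : ℝ :=
  Yaux s zo r t d S Γ i

lemma max_diff_mono (L a a' b b' : ℝ) (hab : a ≤ b) (haa : a ≤ a')
    (hdiff : a' - a ≤ b' - b) (hbb : b ≤ b') :
    max L a' - max L a ≤ max L b' - max L b := by
  rcases le_or_gt L a with h | h
  · rw [max_eq_right h, max_eq_right (h.trans haa), max_eq_right (h.trans hab),
      max_eq_right (h.trans (hab.trans hbb))]
    linarith
  · rcases le_or_gt L b with h3 | h3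
    · rw [max_eq_left h.le, max_eq_right h3, max_eq_right (h3.trans hbb)]
      have : max L a' ≤ L + (b' - b) := max_le (by linarith) (by linarith)
      linarith
    · rw [max_eq_left h.le, max_eq_left h3.le]
      have : max L a' ≤ max L b' := max_le_max le_rfl (by linarith)
      linarith

lemma Yaux_lb (s zo r t d : Fin n → ℝ) (S Γ : Finset (Fin n)) (k : ℕ) (h : k < n) :
    LBv s zo ⟨k, h⟩ ≤ Yaux s zo r t d S Γ k := by
  cases k with
  | zero => simp only [Yaux]; rw [dif_pos h]
  | succ k =>
    simp only [Yaux]; rw [dif_pos h]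
    split_ifs with hS
    · exact le_rfl
    · exact le_max_left _ _

lemma Yaux_le {s zo zd e r t d : Fin n → ℝ} {S Γ : Finset (Fin n)} {x : Fin n → ℝ}
    (hx : x ∈ region s zo zd e r t d S Γ) :
    ∀ (k : ℕ) (h : k < n), Yaux s zo r t d S Γ k ≤ x ⟨k, h⟩ := by
  obtain ⟨h1, h2, h3, h4⟩ := hx
  intro k
  induction k with
  | zero =>
    intro h
    simp only [Yaux]; rw [dif_pos h]
    exact max_le (h1 _) (h2 _)
  | succ k ih =>
    intro h
    simp only [Yaux]; rw [dif_pos h]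
    split_ifs with hS
    · exact max_le (h1 _) (h2 _)
    · have hk : k < n := Nat.lt_of_succ_lt h
      refine max_le (max_le (h1 _) (h2 _)) ?_
      have hchain := h4 ⟨k, hk⟩ h hS
      have hih := ih hk
      unfold cv
      linarith
end Aux

section Aux2

variable {n : ℕ} (s zo zd e r t d w : Fin n → ℝ) (S : Finset (Fin n))

lemma Yv_mem (hr : ∀ i, 0 < r i) (ht : ∀ i, 0 < t i) (hd : ∀ i, 0 ≤ d i)
    {Γ : Finset (Fin n)} {x : Fin n → ℝ} (hx : x ∈ region s zo zd e r t d S Γ) :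
    Yv s zo r t d S Γ ∈ region s zo zd e r t d S Γ := by
  refine ⟨?_, ?_, ?_, ?_⟩
  · intro i
    exact le_trans (le_max_left _ _) (Yaux_lb s zo r t d S Γ i i.isLt)
  · intro i
    exact le_trans (le_max_right _ _) (Yaux_lb s zo r t d S Γ i i.isLt)
  · intro i
    have := Yaux_le hx i i.isLt
    have hxi := hx.2.2.1 i
    exact le_trans this hxi
  · intro i h hS
    have he : (⟨(i : ℕ), Nat.lt_of_succ_lt h⟩ : Fin n) = i := rfl
    show cancel Γ r i + cancel Γ t i + cancel Γ d i ≤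
      Yaux s zo r t d S Γ ((i : ℕ) + 1) - Yaux s zo r t d S Γ (i : ℕ)
    have heq : Yaux s zo r t d S Γ ((i : ℕ) + 1) =
        max (LBv s zo ⟨(i : ℕ) + 1, h⟩)
          (Yaux s zo r t d S Γ (i : ℕ) + cv r t d Γ i) := by
      simp only [Yaux]; rw [dif_pos h, if_neg hS, he]
    rw [heq]
    have h2 : Yaux s zo r t d S Γ (i : ℕ) + cv r t d Γ i ≤
        max (LBv s zo ⟨(i : ℕ) + 1, h⟩)
          (Yaux s zo r t d S Γ (i : ℕ) + cv r t d Γ i) :=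
      le_max_right _ _
    unfold cv at h2 ⊢
    linarith

lemma Yaux_anti (hr : ∀ i, 0 < r i) (ht : ∀ i, 0 < t i) (hd : ∀ i, 0 ≤ d i)
    {Γ' Γ : Finset (Fin n)} (hsub : Γ' ⊆ Γ) :
    ∀ k : ℕ, Yaux s zo r t d S Γ k ≤ Yaux s zo r t d S Γ' k := by
  intro k
  induction k with
  | zero => exact le_of_eq rfl
  | succ k ih =>
    simp only [Yaux]
    split_ifs with h hS
    · exact le_rfl
    · exact max_le_max le_rfl (add_le_add ih (cv_anti r t d hr ht hd hsub _))
    · exact le_rfl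

lemma Yaux_key (hr : ∀ i, 0 < r i) (ht : ∀ i, 0 < t i) (hd : ∀ i, 0 ≤ d i)
    {γ : Fin n} {Δ : Finset (Fin n)} (hγ : γ ∉ Δ) :
    ∀ k : ℕ, Yaux s zo r t d S Δ k - Yaux s zo r t d S (insert γ Δ) k ≤
      Yaux s zo r t d S ∅ k - Yaux s zo r t d S {γ} k := by
  intro k
  induction k with
  | zero => exact le_of_eq rfl
  | succ k ih =>
    by_cases h : k + 1 < n
    · simp only [Yaux]
      rw [dif_pos h, dif_pos h, dif_pos h, dif_pos h]
      by_cases hS' : (⟨k + 1, h⟩ : Fin n) ∈ S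
      · rw [if_pos hS', if_pos hS', if_pos hS', if_pos hS']
      · rw [if_neg hS', if_neg hS', if_neg hS', if_neg hS']
        set i : Fin n := ⟨k, Nat.lt_of_succ_lt h⟩ with hi
        have hsub1 : ({γ} : Finset (Fin n)) ⊆ insert γ Δ := by
          intro x hx; simp only [Finset.mem_singleton] at hx
          simp [hx]
        have hsub2 : (Δ : Finset (Fin n)) ⊆ insert γ Δ := Finset.subset_insert _ _
        have hAB : Yaux s zo r t d S (insert γ Δ) k ≤ Yaux s zo r t d S {γ} k :=
          Yaux_anti s zo r t d S hr ht hd hsub1 k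
        have hAA : Yaux s zo r t d S (insert γ Δ) k ≤ Yaux s zo r t d S Δ k :=
          Yaux_anti s zo r t d S hr ht hd hsub2 k
        have hBB' : Yaux s zo r t d S {γ} k ≤ Yaux s zo r t d S ∅ k :=
          Yaux_anti s zo r t d S hr ht hd (Finset.empty_subset _) k
        have hcAB : cv r t d (insert γ Δ) i ≤ cv r t d {γ} i :=
          cv_anti r t d hr ht hd hsub1 i
        have hcAA : cv r t d (insert γ Δ) i ≤ cv r t d Δ i :=
          cv_anti r t d hr ht hd hsub2 i
        have hcBB' : cv r t d {γ} i ≤ cv r t d ∅ i :=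
          cv_anti r t d hr ht hd (Finset.empty_subset _) i
        have hcd : cv r t d Δ i - cv r t d (insert γ Δ) i =
            cv r t d ∅ i - cv r t d {γ} i := cv_diff r t d hγ i
        have := max_diff_mono (LBv s zo ⟨k + 1, h⟩)
          (Yaux s zo r t d S (insert γ Δ) k + cv r t d (insert γ Δ) i)
          (Yaux s zo r t d S Δ k + cv r t d Δ i)
          (Yaux s zo r t d S {γ} k + cv r t d {γ} i)
          (Yaux s zo r t d S ∅ k + cv r t d ∅ i)
          (by linarith) (by linarith) (by linarith) (by linarith)
        linarith
    · simp only [Yaux]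
      rw [dif_neg h, dif_neg h, dif_neg h, dif_neg h]

lemma region_mono_empty (hr : ∀ i, 0 < r i) (ht : ∀ i, 0 < t i) (hd : ∀ i, 0 ≤ d i)
    (Γ : Finset (Fin n)) :
    region s zo zd e r t d S ∅ ⊆ region s zo zd e r t d S Γ := by
  rintro x ⟨h1, h2, h3, h4⟩
  have hc : ∀ i, cv r t d Γ i ≤ cv r t d ∅ i :=
    cv_anti r t d hr ht hd (Finset.empty_subset _)
  refine ⟨h1, h2, fun i => ?_, fun i h hS => ?_⟩
  · have := h3 i
    have := hc i
    unfold cv at this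
    linarith
  · have := h4 i h hS
    have := hc i
    unfold cv at this
    linarith

lemma Dval_eq_Y (hr : ∀ i, 0 < r i) (ht : ∀ i, 0 < t i) (hd : ∀ i, 0 ≤ d i)
    (hw : ∀ i, 0 ≤ w i) {Γ : Finset (Fin n)}
    (hne : (region s zo zd e r t d S Γ).Nonempty) :
    Dval s zo zd e r t d w S Γ = delayObj w s (Yv s zo r t d S Γ) := by
  obtain ⟨x, hx⟩ := hne
  have hmem := Yv_mem s zo zd e r t d S hr ht hd hx
  have hmin : ∀ z ∈ region s zo zd e r t d S Γ,
      delayObj w s (Yv s zo r t d S Γ) ≤ delayObj w s z := by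
    intro z hz
    unfold delayObj
    apply Finset.sum_le_sum
    intro i _
    have := Yaux_le hz i i.isLt
    exact mul_le_mul_of_nonneg_left (by exact sub_le_sub_right this _) (hw i)
  apply IsLeast.csInf_eq
  constructor
  · exact ⟨_, hmem, rfl⟩
  · rintro b ⟨z, hz, rfl⟩
    exact hmin z hz

end Aux2

/-- Never-cancel claim: if cancelling `γ` alone does not strictly improve the
total cost, then removing `γ` from any cancellation set never hurts. -/
theorem stmt_10 {n : ℕ} (hn : 0 < n)
    (s zo zd e r t d w p : Fin n → ℝ) (S C : Finset (Fin n))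
    (hr : ∀ i, 0 < r i) (ht : ∀ i, 0 < t i) (hd : ∀ i, 0 ≤ d i)
    (hw : ∀ i, 0 ≤ w i)
    (hS : (⟨0, hn⟩ : Fin n) ∈ S)
    (hp : ∀ i ∈ C, 0 < p i)
    (hne : (region s zo zd e r t d S ∅).Nonempty)
    (γ : Fin n) (hγC : γ ∈ C)
    (hγopt : OPT s zo zd e r t d w p S ∅ ≤ OPT s zo zd e r t d w p S {γ}) :
    ∀ Γ ⊆ C, γ ∈ Γ →
      OPT s zo zd e r t d w p S (Γ.erase γ) ≤ OPT s zo zd e r t d w p S Γ := by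
  intro Γ hΓC hγΓ
  set Γ' := Γ.erase γ with hΓ'
  have hγΔ : γ ∉ Γ' := Finset.notMem_erase _ _
  have hins : insert γ Γ' = Γ := Finset.insert_erase hγΓ
  -- nonemptiness of all regions
  have hneΓ : (region s zo zd e r t d S Γ).Nonempty :=
    hne.mono (region_mono_empty s zo zd e r t d S hr ht hd Γ)
  have hneΓ' : (region s zo zd e r t d S Γ').Nonempty :=
    hne.mono (region_mono_empty s zo zd e r t d S hr ht hd Γ')
  have hneγ : (region s zo zd e r t d S {γ}).Nonempty :=
    hne.mono (region_mono_empty s zo zd e r t d S hr ht hd {γ})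
  have e0 := Dval_eq_Y s zo zd e r t d w S hr ht hd hw hne
  have eγ := Dval_eq_Y s zo zd e r t d w S hr ht hd hw hneγ
  have eΓ := Dval_eq_Y s zo zd e r t d w S hr ht hd hw hneΓ
  have eΓ' := Dval_eq_Y s zo zd e r t d w S hr ht hd hw hneΓ'
  -- key pointwise comparison
  have hkey : ∀ i : Fin n, Yv s zo r t d S Γ' i - Yv s zo r t d S Γ i ≤
      Yv s zo r t d S ∅ i - Yv s zo r t d S {γ} i := by
    intro i
    have := Yaux_key s zo r t d S hr ht hd hγΔ (i : ℕ)
    rw [hins] at this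
    exact this
  -- sum comparison
  have hsum : delayObj w s (Yv s zo r t d S Γ') - delayObj w s (Yv s zo r t d S Γ) ≤
      delayObj w s (Yv s zo r t d S ∅) - delayObj w s (Yv s zo r t d S {γ}) := by
    unfold delayObj
    rw [← Finset.sum_sub_distrib, ← Finset.sum_sub_distrib]
    apply Finset.sum_le_sum
    intro i _
    have h1 := mul_le_mul_of_nonneg_left (hkey i) (hw i)
    nlinarith [h1]
  -- from hγopt
  have hDp : Dval s zo zd e r t d w S ∅ ≤ Dval s zo zd e r t d w S {γ} + p γ := by
    unfold OPT at hγopt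
    simp only [Finset.sum_empty, Finset.sum_singleton] at hγopt
    linarith
  have hps : ∑ i ∈ Γ, p i = p γ + ∑ i ∈ Γ', p i := by
    rw [← hins, Finset.sum_insert hγΔ]
  unfold OPT
  rw [hps, e0, eγ, eΓ, eΓ'] at *
  linarith
end
end
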